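/- Equivalence of pattern matching with a conjunctive (join) query: Let q be a pattern query whose top-level term is a Match term, in which all Match subpatterns carry pairwise distinct node variables and in which the constraint θ of each Match subpattern p references only the node variables of Match subpatterns occurring within p. Let N be an AST root and N' ∈ D(N). Then N' ∈ q(N) if and only if there exists an assignment σ mapping each Match-subpattern occurrence of q to a node of D(N) such that: (i) σ(q) = N'; (ii) for every Match subpattern p = Match(ℓ, i, [p₁,…,pₙ], θ) in the domain of σ, the node σ(p) has label ℓ and exactly n children, and for each index k such that pₖ is a Match subpattern, the k-th child of σ(p) equals σ(pₖ); and (iii) for every Match subpattern p = Match(ℓ, i, [p₁,…,pₙ], θ) in the domain of σ, the constraint θ holds on the scope Γ_σ that maps the node variable of each Match subpattern p' to the attribute map of σ(p'). -/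

import Mathlib

open Classical
noncomputable section

/-! ### Abstract syntax trees -/

/-- An AST node: a label, an attribute map, and a list of children.  The type
`Attr` stands for the finite partial attribute maps `Σ_M ⇀ 𝔻`. -/
inductive ASTNode (L : Type) (Attr : Type) : Type where
  | mk : L → Attr → List (ASTNode L Attr) → ASTNode L Attr

namespace ASTNode

variable {L Attr : Type}

def label : ASTNode L Attr → L
  | .mk ℓ _ _ => ℓ

def attrs : ASTNode L Attr → Attr
  | .mk _ A _ => A

def children : ASTNode L Attr → List (ASTNode L Attr)
  | .mk _ _ ns => ns

end ASTNode

/-! ### Scopes -/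

/-- A scope: a partial map from node variables to attribute maps. -/
def Scope (I : Type) (Attr : Type) := I → Option Attr

def emptyScope {I Attr : Type} : Scope I Attr := fun _ => none

/-- Left-biased union of scopes. -/
def Scope.union {I Attr : Type} (Γ₁ Γ₂ : Scope I Attr) : Scope I Attr :=
  fun i => (Γ₁ i).orElse (fun _ => Γ₂ i)

/-- `{i ↦ A} ∪ Γ`. -/
def Scope.insert {I Attr : Type} (i : I) (A : Attr) (Γ : Scope I Attr) : Scope I Attr :=
  fun j => if j = i then some A else Γ j

/-! ### Pattern queries -/

/-- Pattern queries: `AnyNode`, or `Match(ℓ, i, [q₁,…,qₙ], θ)` with `θ` a Boolean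
predicate on scopes. -/
inductive Pattern (L : Type) (Attr : Type) (I : Type) : Type where
  | any : Pattern L Attr I
  | node : L → I → List (Pattern L Attr I) → (Scope I Attr → Bool) → Pattern L Attr I

variable {L Attr I : Type}

mutual
/-- Pattern evaluation `⟦q(N)⟧`, returning a Boolean and a scope. -/
def evalPattern : Pattern L Attr I → ASTNode L Attr → Bool × Scope I Attr
  | .any, _ => (true, emptyScope)
  | .node ℓq i qs θ, .mk ℓ A ns =>
      match evalChildren qs ns with
      | none => (false, emptyScope)
      | some Γc =>
          let Γ : Scope I Attr := Scope.insert i A Γc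
          if ℓq = ℓ ∧ θ Γ = true then (true, Γ) else (false, emptyScope)

/-- Evaluate the children: succeeds (returning the union of the child scopes)
iff the lists have equal length and every child pattern matches. -/
def evalChildren : List (Pattern L Attr I) → List (ASTNode L Attr) → Option (Scope I Attr)
  | [], [] => some emptyScope
  | q :: qs, n :: ns =>
      match evalPattern q n, evalChildren qs ns with
      | (true, Γ₁), some Γ₂ => some (Γ₁.union Γ₂)
      | _, _ => none
  | _, _ => none
end

mutual
/-- The descendants `D(N)` of a node (as a list). -/
def ASTNode.descendants : ASTNode L Attr → List (ASTNode L Attr)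
  | .mk ℓ A ns => .mk ℓ A ns :: descendantsList ns

def descendantsList : List (ASTNode L Attr) → List (ASTNode L Attr)
  | [] => []
  | n :: ns => n.descendants ++ descendantsList ns
end

/-- The match set `q(N)`: descendants of `N` on which `q` evaluates to true. -/
def matchSet (q : Pattern L Attr I) (N : ASTNode L Attr) : Set (ASTNode L Attr) :=
  {N' | N' ∈ N.descendants ∧ ∃ Γ, evalPattern q N' = (true, Γ)}

/-! ### Generalized multisets -/

/-- Lift a list (in particular, a set given as a duplicate-free list) to the
generalized multiset counting occurrences. -/
def listGM (l : List (ASTNode L Attr)) : ASTNode L Attr →₀ ℤ :=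
  (l.map (fun x => Finsupp.single x (1 : ℤ))).sum

/-- A view `V_q` is correct for `N` if it maps elements of `q(N)` to `1` and all
other nodes to `0`. -/
def CorrectView (q : Pattern L Attr I) (N : ASTNode L Attr) (V : ASTNode L Attr →₀ ℤ) : Prop :=
  ∀ x, V x = if x ∈ matchSet q N then 1 else 0

/-- `IVM(q, V, Δ)`: add `Δ(x)` to `V(x)` at every `x` on which `q` evaluates to true. -/
def IVM (q : Pattern L Attr I) (V Δ : ASTNode L Attr →₀ ℤ) : ASTNode L Attr →₀ ℤ :=
  V + Δ.filter (fun x => (evalPattern q x).1 = true)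

/-! ### Replacement, depth, ancestors -/

mutual
/-- The replacement `N[R\R']`. -/
def ASTNode.repl (R R' : ASTNode L Attr) : ASTNode L Attr → ASTNode L Attr
  | .mk ℓ A ns =>
      if ASTNode.mk ℓ A ns = R then R' else .mk ℓ A (replList R R' ns)

def replList (R R' : ASTNode L Attr) : List (ASTNode L Attr) → List (ASTNode L Attr)
  | [] => []
  | n :: ns => ASTNode.repl R R' n :: replList R R' ns
end

mutual
/-- The depth `dep(q)` of a pattern. -/
def Pattern.depth : Pattern L Attr I → ℕ
  | .any => 0
  | .node _ _ qs _ => 1 + depthList qs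

def depthList : List (Pattern L Attr I) → ℕ
  | [] => 0
  | q :: qs => max q.depth (depthList qs)
end

/-- `descAt d N M`: `M` is a descendant of `N` at distance exactly `d`. -/
def descAt : ℕ → ASTNode L Attr → ASTNode L Attr → Prop
  | 0, N, M => N = M
  | d + 1, N, M => ∃ c ∈ N.children, descAt d c M

/-- The generalized multiset `{| Aⁱ(R) ↦ 1 : 1 ≤ i ≤ d, Aⁱ(R) exists relative to N |}`
of ancestors of `R` (in `N`) at distances `1,…,d`. -/
def ancestorsGM (N R : ASTNode L Attr) (d : ℕ) : ASTNode L Attr →₀ ℤ :=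
  ∑ i ∈ Finset.Icc 1 d, listGM (N.descendants.filter (fun A => decide (descAt i A R)))

/-- The maximal search set `⌈R, R'⌉_q` (ancestors of `R` are taken in `N`,
ancestors of `R'` in `N[R\R']`). -/
def maxSearchSet (q : Pattern L Attr I) (N R R' : ASTNode L Attr) : ASTNode L Attr →₀ ℤ :=
  listGM R.descendants + ancestorsGM N R q.depth
    - listGM R'.descendants - ancestorsGM (N.repl R R') R' q.depth

/-! ### Node generators -/

/-- Node generators: `Reuse(i)` or `Gen(ℓ, ā, [g₁,…,gₙ])`, where the attribute
expressions `ā` are collectively a function from scopes to attribute maps. -/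
inductive NodeGen (L : Type) (Attr : Type) (I : Type) : Type where
  | reuse : I → NodeGen L Attr I
  | gen : L → (Scope I Attr → Attr) → List (NodeGen L Attr I) → NodeGen L Attr I

mutual
/-- Generator evaluation `⟦g⟧_{Γ,μ}`. -/
def evalGen (Γ : Scope I Attr) (μ : I → ASTNode L Attr) : NodeGen L Attr I → ASTNode L Attr
  | .reuse i => μ i
  | .gen ℓ a gs => .mk ℓ (a Γ) (evalGenList Γ μ gs)

def evalGenList (Γ : Scope I Attr) (μ : I → ASTNode L Attr) :
    List (NodeGen L Attr I) → List (ASTNode L Attr)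
  | [] => []
  | g :: gs => evalGen Γ μ g :: evalGenList Γ μ gs
end

mutual
/-- The matched node pairs `MP(q, R)`. -/
def MP : Pattern L Attr I → ASTNode L Attr → List (Pattern L Attr I × ASTNode L Attr)
  | .any, R => [(.any, R)]
  | .node ℓ i qs θ, .mk ℓ' A ns => (.node ℓ i qs θ, .mk ℓ' A ns) :: MPList qs ns

def MPList : List (Pattern L Attr I) → List (ASTNode L Attr) →
    List (Pattern L Attr I × ASTNode L Attr)
  | q :: qs, n :: ns => MP q n ++ MPList qs ns
  | _, _ => []
end

mutual
/-- The generated node pairs `GP(g, Γ, μ)`. -/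
def GP (Γ : Scope I Attr) (μ : I → ASTNode L Attr) :
    NodeGen L Attr I → List (NodeGen L Attr I × ASTNode L Attr)
  | .reuse i => [(.reuse i, μ i)]
  | .gen ℓ a gs => (.gen ℓ a gs, evalGen Γ μ (.gen ℓ a gs)) :: GPList Γ μ gs

def GPList (Γ : Scope I Attr) (μ : I → ASTNode L Attr) :
    List (NodeGen L Attr I) → List (NodeGen L Attr I × ASTNode L Attr)
  | [] => []
  | g :: gs => GP Γ μ g ++ GPList Γ μ gs
end

/-- A generator `g` is safe for `(q, R)` with scopes `Γ, μ`: it reuses exactly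
the wildcard-matched subtrees of `R`. -/
def SafeGen (q : Pattern L Attr I) (R : ASTNode L Attr) (g : NodeGen L Attr I)
    (Γ : Scope I Attr) (μ : I → ASTNode L Attr) : Prop :=
  ∀ N : ASTNode L Attr,
    (Pattern.any, N) ∈ MP q R ↔ ∃ i, μ i = N ∧ (NodeGen.reuse i, N) ∈ GP Γ μ g

mutual
/-- `|g|`: the number of `Gen` and `Reuse` terms in `g`. -/
def NodeGen.size : NodeGen L Attr I → ℕ
  | .reuse _ => 1
  | .gen _ _ gs => 1 + sizeGenList gs

def sizeGenList : List (NodeGen L Attr I) → ℕ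
  | [] => 0
  | g :: gs => g.size + sizeGenList gs
end

mutual
/-- `|q|`: the number of `Match` and `AnyNode` terms in `q`. -/
def Pattern.size : Pattern L Attr I → ℕ
  | .any => 1
  | .node _ _ qs _ => 1 + sizePatList qs

def sizePatList : List (Pattern L Attr I) → ℕ
  | [] => 0
  | q :: qs => q.size + sizePatList qs
end

/-! ### Paths, occurrences, alignment -/

/-- The node reached from `N` by following the child-index path `π`. -/
def nodeAt (N : ASTNode L Attr) (π : List ℕ) : Option (ASTNode L Attr) :=
  match π with
  | [] => some N
  | k :: π' => (N.children[k]?).bind fun c => nodeAt c π'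

/-- The subpattern occurrence of `q` located at the child-index path `π`. -/
def subAt (q : Pattern L Attr I) (π : List ℕ) : Option (Pattern L Attr I) :=
  match π, q with
  | [], q => some q
  | _ :: _, .any => none
  | k :: π', .node _ _ qs _ => (qs[k]?).bind fun qk => subAt qk π'

/-- `π` is an occurrence of a `Match` subpattern with node variable `i`. -/
def IsMatchVarOcc (q : Pattern L Attr I) (π : List ℕ) (i : I) : Prop :=
  ∃ ℓ qs θ, subAt q π = some (.node ℓ i qs θ)

/-- `π` is an occurrence of a `Match` subpattern of `q`. -/
def IsMatchOcc (q : Pattern L Attr I) (π : List ℕ) : Prop :=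
  ∃ i, IsMatchVarOcc q π i

/-- The node variables of the `Match` subpatterns of `q`. -/
def patVars (q : Pattern L Attr I) : Set I :=
  {i | ∃ π, IsMatchVarOcc q π i}

/-- The scope `Γ_σ` induced by an assignment `σ` of nodes to (paths of)
`Match`-subpattern occurrences of `q`: it maps the node variable of each
`Match` subpattern to the attribute map of the assigned node. -/
def scopeOf (q : Pattern L Attr I) (σ : List ℕ → ASTNode L Attr) : Scope I Attr :=
  fun i => if h : ∃ π, IsMatchVarOcc q π i then some (σ h.choose).attrs else none

mutual
/-- Structural alignment at depth 0. -/
def align0 : Pattern L Attr I → NodeGen L Attr I → Bool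
  | .any, _ => true
  | _, .reuse _ => true
  | .node ℓ _ qs _, .gen ℓ' _ gs =>
      if ℓ = ℓ' ∧ qs.length = gs.length then align0List qs gs else false

def align0List : List (Pattern L Attr I) → List (NodeGen L Attr I) → Bool
  | [], [] => true
  | q :: qs, g :: gs => align0 q g && align0List qs gs
  | _, _ => false
end

/-- Structural alignment at depth `d`. -/
def alignD : ℕ → Pattern L Attr I → NodeGen L Attr I → Bool
  | 0, q, g => align0 q g
  | _ + 1, .any, _ => false
  | d + 1, .node _ _ qs _, g => qs.attach.any (fun qk => alignD d qk.1 g)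

end

/-!
If an assignment `σ` respects the shape of `q` (labels, arities and child links), then evaluating
a `Match` subpattern `p` of `q` at its assigned node can be computed in closed form: it succeeds
exactly when every constraint inside `p` holds on `Γ_σ`, and then returns `Γ_σ` restricted to the
variables of `p`. Distinctness of the node variables makes the left-biased scope unions of the
evaluator agree with `Γ_σ`, and locality lets each `θ` be evaluated on `Γ_σ` instead of on the
scope the evaluator builds. Conversely, a successful match of `q` at `N'` yields such an
assignment by following child-index paths from `N'`.
-/

namespace Scope

variable {I Attr : Type}

noncomputable def restrict (Γ : Scope I Attr) (S : Set I) : Scope I Attr :=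
  fun j => if j ∈ S then Γ j else none

theorem restrict_empty (Γ : Scope I Attr) : Γ.restrict ∅ = emptyScope := by
  funext j
  simp [restrict, emptyScope]

theorem restrict_union (Γ : Scope I Attr) (S T : Set I) :
    Γ.restrict (S ∪ T) = (Γ.restrict S).union (Γ.restrict T) := by
  funext j
  by_cases hS : j ∈ S <;> by_cases hT : j ∈ T <;> cases Γ j <;> simp [restrict, union, hS, hT]

theorem insert_restrict {Γ : Scope I Attr} {i : I} {A : Attr} (h : Γ i = some A) (S : Set I) :
    (Γ.restrict S).insert i A = Γ.restrict (Insert.insert i S) := by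
  funext j
  by_cases hj : j = i
  · subst hj
    simp [restrict, Scope.insert, h]
  · simp [restrict, Scope.insert, hj]

end Scope

section JoinQuery

variable {L Attr I : Type}

theorem nodeAt_append (N : ASTNode L Attr) (π₁ π₂ : List ℕ) :
    nodeAt N (π₁ ++ π₂) = (nodeAt N π₁).bind fun M => nodeAt M π₂ := by
  induction π₁ generalizing N with
  | nil => simp [nodeAt]
  | cons k π₁ ih =>
    simp only [List.cons_append, nodeAt, Option.bind_assoc]
    cases N.children[k]? <;> simp [ih]

theorem subAt_nil (p : Pattern L Attr I) : subAt p [] = some p := by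
  cases p <;> rfl

theorem subAt_append (p : Pattern L Attr I) (π₁ π₂ : List ℕ) :
    subAt p (π₁ ++ π₂) = (subAt p π₁).bind fun p' => subAt p' π₂ := by
  induction π₁ generalizing p with
  | nil => simp [subAt_nil]
  | cons k π₁ ih =>
    cases p with
    | any => rfl
    | node ℓ i qs θ =>
      simp only [List.cons_append, subAt, Option.bind_assoc]
      cases qs[k]? <;> simp [ih]

theorem self_mem_descendants (M : ASTNode L Attr) : M ∈ M.descendants := by
  cases M
  simp [ASTNode.descendants]

theorem mem_descendantsList_iff {ns : List (ASTNode L Attr)} {x : ASTNode L Attr} :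
    x ∈ descendantsList ns ↔ ∃ c ∈ ns, x ∈ c.descendants := by
  induction ns with
  | nil => simp [descendantsList]
  | cons n ns ih => simp [descendantsList, ih]

theorem mem_descendants_of_mem_children :
    ∀ {N M c : ASTNode L Attr}, M ∈ N.descendants → c ∈ M.children → c ∈ N.descendants
  | .mk ℓ A ns, M, c, hM, hc => by
    simp only [ASTNode.descendants, List.mem_cons, mem_descendantsList_iff] at hM ⊢
    rcases hM with rfl | ⟨n, hn, hMn⟩
    · exact Or.inr ⟨c, hc, self_mem_descendants c⟩
    · have := List.sizeOf_lt_of_mem hn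
      exact Or.inr ⟨n, hn, mem_descendants_of_mem_children hMn hc⟩
termination_by N => N

theorem nodeAt_mem_descendants {N M M' : ASTNode L Attr} {π : List ℕ}
    (hM : M ∈ N.descendants) (h : nodeAt M π = some M') : M' ∈ N.descendants := by
  induction π generalizing M with
  | nil => simp only [nodeAt, Option.some.injEq] at h; exact h ▸ hM
  | cons k π ih =>
    obtain ⟨c, hc, h⟩ := Option.bind_eq_some_iff.1 h
    exact ih (mem_descendants_of_mem_children hM (List.mem_of_getElem? hc)) h

def Pattern.ConstraintsHold (p : Pattern L Attr I) (Γ : Scope I Attr) : Prop :=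
  ∀ π ℓ i qs θ, subAt p π = some (Pattern.node ℓ i qs θ) → θ Γ = true

theorem Pattern.constraintsHold_any (Γ : Scope I Attr) :
    (Pattern.any : Pattern L Attr I).ConstraintsHold Γ := by
  rintro (_ | ⟨k, π⟩) ℓ i qs θ h <;> cases h

theorem Pattern.constraintsHold_node {ℓ : L} {i : I} {qs : List (Pattern L Attr I)}
    {θ : Scope I Attr → Bool} {Γ : Scope I Attr} :
    (Pattern.node ℓ i qs θ).ConstraintsHold Γ ↔ θ Γ = true ∧ ∀ qk ∈ qs, qk.ConstraintsHold Γ := by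
  constructor
  · intro h
    refine ⟨h [] ℓ i qs θ rfl, fun qk hqk π ℓ' i' qs' θ' hsub => ?_⟩
    obtain ⟨k, hk⟩ := List.mem_iff_getElem?.1 hqk
    exact h (k :: π) ℓ' i' qs' θ' (by simp [subAt, hk, hsub])
  · rintro ⟨hθ, hqs⟩ (_ | ⟨k, π⟩) ℓ' i' qs' θ' hsub
    · cases hsub; exact hθ
    · obtain ⟨qk, hk, hsub⟩ := Option.bind_eq_some_iff.1 hsub
      exact hqs qk (List.mem_of_getElem? hk) π ℓ' i' qs' θ' hsub

theorem patVars_any : patVars (Pattern.any : Pattern L Attr I) = ∅ := by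
  ext j
  simp only [patVars, IsMatchVarOcc, Set.mem_ofPred_eq, Set.mem_empty_iff_false, iff_false]
  rintro ⟨_ | ⟨k, π⟩, ℓ, qs, θ, h⟩ <;> cases h

theorem patVars_node (ℓ : L) (i : I) (qs : List (Pattern L Attr I)) (θ : Scope I Attr → Bool) :
    patVars (Pattern.node ℓ i qs θ) = insert i (⋃ qk ∈ qs, patVars qk) := by
  ext j
  simp only [patVars, IsMatchVarOcc, Set.mem_ofPred_eq, Set.mem_insert_iff, Set.mem_iUnion]
  constructor
  · rintro ⟨_ | ⟨k, π⟩, ℓ', qs', θ', h⟩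
    · cases h; exact Or.inl rfl
    · obtain ⟨qk, hk, hsub⟩ := Option.bind_eq_some_iff.1 h
      exact Or.inr ⟨qk, List.mem_of_getElem? hk, π, ℓ', qs', θ', hsub⟩
  · rintro (rfl | ⟨qk, hqk, π, ℓ', qs', θ', hsub⟩)
    · exact ⟨[], ℓ, qs, θ, rfl⟩
    · obtain ⟨k, hk⟩ := List.mem_iff_getElem?.1 hqk
      exact ⟨k :: π, ℓ', qs', θ', by simp [subAt, hk, hsub]⟩

theorem scopeOf_eq {q : Pattern L Attr I} {σ : List ℕ → ASTNode L Attr}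
    (hdistinct : ∀ π₁ π₂ i, IsMatchVarOcc q π₁ i → IsMatchVarOcc q π₂ i → π₁ = π₂)
    {π : List ℕ} {i : I} (h : IsMatchVarOcc q π i) :
    scopeOf q σ i = some (σ π).attrs := by
  have hex : ∃ π', IsMatchVarOcc q π' i := ⟨π, h⟩
  rw [scopeOf, dif_pos hex, hdistinct _ _ _ hex.choose_spec h]

theorem evalPattern_any (M : ASTNode L Attr) :
    evalPattern (Pattern.any : Pattern L Attr I) M = (true, emptyScope) := by
  cases M; rw [evalPattern]

theorem evalPattern_node_of_evalChildren_eq_none {ℓ : L} {i : I} {qs : List (Pattern L Attr I)}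
    (θ : Scope I Attr → Bool) {M : ASTNode L Attr} (h : evalChildren qs M.children = none) :
    evalPattern (Pattern.node ℓ i qs θ) M = (false, emptyScope) := by
  cases M
  simp_all [evalPattern, ASTNode.children]

theorem evalPattern_node_of_evalChildren_eq_some {ℓ : L} {i : I} {qs : List (Pattern L Attr I)}
    (θ : Scope I Attr → Bool) {M : ASTNode L Attr} {Γc : Scope I Attr}
    (h : evalChildren qs M.children = some Γc) :
    evalPattern (Pattern.node ℓ i qs θ) M =
      if ℓ = M.label ∧ θ (Γc.insert i M.attrs) = true then (true, Γc.insert i M.attrs)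
      else (false, emptyScope) := by
  cases M
  simp only [ASTNode.children] at h
  simp only [evalPattern, h]
  rfl

theorem forall₂_of_evalChildren_eq_some :
    ∀ {qs : List (Pattern L Attr I)} {ns : List (ASTNode L Attr)} {Γ : Scope I Attr},
      evalChildren qs ns = some Γ →
        List.Forall₂ (fun q n => ∃ Γ', evalPattern q n = (true, Γ')) qs ns
  | [], [], _, _ => .nil
  | q :: qs, n :: ns, Γ, h => by
    rw [evalChildren] at h
    rcases h₁ : evalPattern q n with ⟨_ | _, Γ₁⟩ <;> rcases h₂ : evalChildren qs ns with _ | Γ₂ <;>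
      simp only [h₁, h₂, reduceCtorEq] at h
    exact .cons ⟨Γ₁, h₁⟩ (forall₂_of_evalChildren_eq_some h₂)
  | [], _ :: _, _, h | _ :: _, [], _, h => by simp [evalChildren] at h

theorem evalChildren_eq_of_forall₂ (Γ : Scope I Attr) {qs : List (Pattern L Attr I)}
    {ns : List (ASTNode L Attr)}
    (h : List.Forall₂ (fun q n => evalPattern q n =
      if q.ConstraintsHold Γ then (true, Γ.restrict (patVars q)) else (false, emptyScope)) qs ns) :
    evalChildren qs ns =
      if ∀ q ∈ qs, q.ConstraintsHold Γ then some (Γ.restrict (⋃ q ∈ qs, patVars q)) else none := by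
  induction h with
  | nil => simp [evalChildren, Scope.restrict_empty]
  | @cons q n qs ns hq _ ih =>
    rw [evalChildren, hq, ih]
    by_cases h₁ : q.ConstraintsHold Γ <;> by_cases h₂ : ∀ q ∈ qs, q.ConstraintsHold Γ
    · have hcons : ∀ x ∈ q :: qs, x.ConstraintsHold Γ := List.forall_mem_cons.2 ⟨h₁, h₂⟩
      rw [if_pos h₁, if_pos h₂, if_pos hcons]
      simp [Scope.restrict_union]
    all_goals simp [h₁, h₂]

def RespectsShape (q : Pattern L Attr I) (σ : List ℕ → ASTNode L Attr) : Prop :=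
  ∀ π ℓ i qs θ, subAt q π = some (Pattern.node ℓ i qs θ) →
    (σ π).label = ℓ ∧ (σ π).children.length = qs.length ∧
    ∀ k ℓ' i' qs' θ', qs[k]? = some (Pattern.node ℓ' i' qs' θ') →
      (σ π).children[k]? = some (σ (π ++ [k]))

theorem exists_nodeAt_of_evalPattern {p : Pattern L Attr I} {M : ASTNode L Attr}
    {Γ : Scope I Attr} (h : evalPattern p M = (true, Γ)) :
    ∀ π ℓ i qs θ, subAt p π = some (Pattern.node ℓ i qs θ) →
      ∃ M', nodeAt M π = some M' ∧ M'.label = ℓ ∧ M'.children.length = qs.length := by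
  intro π ℓ i qs θ hsub
  induction π generalizing p M Γ with
  | nil =>
    cases hsub
    cases hc : evalChildren qs M.children with
    | none => simp [evalPattern_node_of_evalChildren_eq_none θ hc] at h
    | some Γc =>
      rw [evalPattern_node_of_evalChildren_eq_some θ hc] at h
      split_ifs at h with hθ
      · exact ⟨M, rfl, hθ.1.symm, (forall₂_of_evalChildren_eq_some hc).length_eq.symm⟩
      · cases h
  | cons k π ih =>
    obtain _ | ⟨ℓ₀, i₀, qs₀, θ₀⟩ := p
    · cases hsub
    obtain ⟨qk, hqk, hsub⟩ := Option.bind_eq_some_iff.1 hsub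
    cases hc : evalChildren qs₀ M.children with
    | none => simp [evalPattern_node_of_evalChildren_eq_none θ₀ hc] at h
    | some Γc =>
      obtain ⟨hlen, hget⟩ := List.forall₂_iff_get.1 (forall₂_of_evalChildren_eq_some hc)
      obtain ⟨hk, rfl⟩ := List.getElem?_eq_some_iff.1 hqk
      obtain ⟨Γk, hevk⟩ := hget k hk (hlen ▸ hk)
      obtain ⟨M', hM', hM'shape⟩ := ih hevk hsub
      refine ⟨M', ?_, hM'shape⟩
      simpa [nodeAt, List.getElem?_eq_getElem (hlen ▸ hk)] using hM'

theorem respectsShape_nodeAt {q : Pattern L Attr I} {N : ASTNode L Attr}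
    (h : ∀ π ℓ i qs θ, subAt q π = some (Pattern.node ℓ i qs θ) →
      ∃ M', nodeAt N π = some M' ∧ M'.label = ℓ ∧ M'.children.length = qs.length) :
    RespectsShape q (fun π => (nodeAt N π).getD N) := by
  intro π ℓ i qs θ hsub
  obtain ⟨M, hM, hlabel, hlen⟩ := h π ℓ i qs θ hsub
  refine ⟨by simp [hM, hlabel], by simp [hM, hlen], fun k ℓ' i' qs' θ' hk => ?_⟩
  have hsubk : subAt q (π ++ [k]) = some (Pattern.node ℓ' i' qs' θ') := by
    simp [subAt_append, hsub, subAt, hk]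
  have hchild : nodeAt N (π ++ [k]) = M.children[k]? := by simp [nodeAt_append, hM, nodeAt]
  obtain ⟨Mk, hMk, -⟩ := h _ ℓ' i' qs' θ' hsubk
  rw [hchild] at hMk
  simp [hM, hchild, hMk]

section Join

variable {q : Pattern L Attr I} {σ : List ℕ → ASTNode L Attr}

theorem evalPattern_eq_of_respectsShape
    (hdistinct : ∀ π₁ π₂ i, IsMatchVarOcc q π₁ i → IsMatchVarOcc q π₂ i → π₁ = π₂)
    (hlocal : ∀ π ℓ i qs θ, subAt q π = some (Pattern.node ℓ i qs θ) →
        ∀ Γ Γ' : Scope I Attr,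
          (∀ j ∈ patVars (Pattern.node ℓ i qs θ), Γ j = Γ' j) → θ Γ = θ Γ')
    (hshape : RespectsShape q σ) :
    ∀ (p : Pattern L Attr I) (π₀ : List ℕ) (M : ASTNode L Attr), subAt q π₀ = some p →
      (p = .any ∨ M = σ π₀) →
      evalPattern p M = if p.ConstraintsHold (scopeOf q σ) then
        (true, (scopeOf q σ).restrict (patVars p)) else (false, emptyScope)
  | .any, _, M, _, _ => by
    simp [evalPattern_any, Pattern.constraintsHold_any, patVars_any, Scope.restrict_empty]
  | .node ℓ i qs θ, π₀, M, hp, hM => by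
    obtain rfl : M = σ π₀ := hM.resolve_left (by simp)
    obtain ⟨hlabel, hlen, hchild⟩ := hshape π₀ ℓ i qs θ hp
    have hchildren : List.Forall₂ (fun qk nk => evalPattern qk nk =
        if qk.ConstraintsHold (scopeOf q σ) then (true, (scopeOf q σ).restrict (patVars qk))
        else (false, emptyScope)) qs (σ π₀).children := by
      refine List.forall₂_iff_get.2 ⟨hlen.symm, fun k hk _ => ?_⟩
      have := List.sizeOf_lt_of_mem (List.getElem_mem hk)
      refine evalPattern_eq_of_respectsShape hdistinct hlocal hshape qs[k] (π₀ ++ [k]) _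
        (by simp [subAt_append, hp, subAt]) ?_
      rcases hqk : qs[k] with _ | ⟨ℓ', i', qs', θ'⟩
      · exact .inl rfl
      · have hlink := hchild k ℓ' i' qs' θ' (List.getElem?_eq_some_iff.2 ⟨hk, hqk⟩)
        exact .inr (Option.some.inj ((List.getElem?_eq_getElem _).symm.trans hlink))
    have hc := evalChildren_eq_of_forall₂ _ hchildren
    by_cases hC : ∀ qk ∈ qs, qk.ConstraintsHold (scopeOf q σ)
    · rw [if_pos hC] at hc
      rw [evalPattern_node_of_evalChildren_eq_some θ hc,
        Scope.insert_restrict (scopeOf_eq hdistinct ⟨ℓ, qs, θ, hp⟩), ← patVars_node ℓ i qs θ,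
        hlocal π₀ ℓ i qs θ hp _ (scopeOf q σ) (fun j hj => by simp [Scope.restrict, hj])]
      by_cases hθ : θ (scopeOf q σ) = true
      · rw [if_pos ⟨hlabel.symm, hθ⟩, if_pos (Pattern.constraintsHold_node.2 ⟨hθ, hC⟩)]
      · rw [if_neg (fun h => hθ h.2), if_neg (fun h => hθ (Pattern.constraintsHold_node.1 h).1)]
    · rw [if_neg hC] at hc
      rw [evalPattern_node_of_evalChildren_eq_none θ hc,
        if_neg (fun h => hC (Pattern.constraintsHold_node.1 h).2)]
termination_by p => p

end Join

end JoinQuery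

/-- **Equivalence of pattern matching with a conjunctive (join)
query.** For a pattern `q` whose top-level term is a `Match`, with pairwise
distinct node variables on its `Match` subpatterns, and whose constraints only
reference variables of `Match` subpatterns occurring within them: a descendant
`N'` of `N` is in `q(N)` iff there is an assignment `σ` of nodes of `D(N)` to
the `Match`-subpattern occurrences of `q` (identified by their child-index
paths) with `σ(q) = N'`, satisfying the structural join conditions and the
constraints on the induced scope. -/
theorem pattern_match_join_equiv {L Attr I : Type}
    (q : Pattern L Attr I)
    (hq : ∃ ℓ i qs θ, q = Pattern.node ℓ i qs θ)
    (hdistinct : ∀ π₁ π₂ i, IsMatchVarOcc q π₁ i → IsMatchVarOcc q π₂ i → π₁ = π₂)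
    (hlocal : ∀ π ℓ i qs θ, subAt q π = some (Pattern.node ℓ i qs θ) →
        ∀ Γ Γ' : Scope I Attr,
          (∀ j ∈ patVars (Pattern.node ℓ i qs θ), Γ j = Γ' j) → θ Γ = θ Γ')
    (N N' : ASTNode L Attr) (hN' : N' ∈ N.descendants) :
    N' ∈ matchSet q N ↔
      ∃ σ : List ℕ → ASTNode L Attr,
        σ [] = N' ∧
        (∀ π, IsMatchOcc q π → σ π ∈ N.descendants) ∧
        (∀ π ℓ i qs θ, subAt q π = some (Pattern.node ℓ i qs θ) →
          (σ π).label = ℓ ∧ (σ π).children.length = qs.length ∧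
          ∀ k ℓ' i' qs' θ', qs[k]? = some (Pattern.node ℓ' i' qs' θ') →
            (σ π).children[k]? = some (σ (π ++ [k]))) ∧
        (∀ π ℓ i qs θ, subAt q π = some (Pattern.node ℓ i qs θ) →
          θ (scopeOf q σ) = true) := by
  constructor
  · rintro ⟨-, Γ, hev⟩
    have hnodes := exists_nodeAt_of_evalPattern hev
    have hshape := respectsShape_nodeAt hnodes
    have hconstraints : q.ConstraintsHold (scopeOf q fun π => (nodeAt N' π).getD N') := by
      by_contra hfail
      rw [evalPattern_eq_of_respectsShape hdistinct hlocal hshape q [] N' (subAt_nil q) (.inr rfl),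
        if_neg hfail] at hev
      cases hev
    refine ⟨_, rfl, fun π ⟨i, ℓ, qs, θ, hsub⟩ => ?_, hshape, hconstraints⟩
    obtain ⟨M, hM, -⟩ := hnodes π ℓ i qs θ hsub
    simpa [hM] using nodeAt_mem_descendants hN' hM
  · rintro ⟨σ, rfl, -, hshape, hconstraints : q.ConstraintsHold (scopeOf q σ)⟩
    exact ⟨hN', _, by
      rw [evalPattern_eq_of_respectsShape hdistinct hlocal hshape q [] (σ []) (subAt_nil q)
        (.inr rfl), if_pos hconstraints]⟩
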